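/- Plackett's identity: for a,b ∈ ℝ and ρ ∈ (−1,1), the partial derivative of the bivariate standard normal cdf with respect to the correlation equals the bivariate normal density: ∂Φ₂(a,b;ρ)/∂ρ = φ₂(a,b;ρ), where φ₂(a,b;ρ) = (2π√(1−ρ²))^{-1} exp(−(a² − 2ρab + b²)/(2(1−ρ²))). -/

import Mathlib

/-!
Completing the square, `φ₂(x, y; r) = φ(x) · φ((y - r x) / √(1 - r²)) / √(1 - r²)` with `φ` the
standard normal density, so the inner integral of `Φ₂(a, b; r)` is `φ(x) · Φ((b - r x) / √(1 - r²))`.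
Its derivative in `r` is `φ₂(x, b; r) · (r b - x) / (1 - r²)`, which is also `∂φ₂/∂x (x, b; r)`.
For `r` in a compact subinterval of `(-1, 1)` these derivatives are dominated by a multiple of
`(|b| + |x|) e^{-x²/2}`, so one may differentiate under the outer integral, and integrating
`∂φ₂/∂x` over `(-∞, a]` gives `φ₂(a, b; r)`.
-/

open MeasureTheory Real Set

/-- Bivariate standard normal density with correlation ρ. -/
noncomputable def phi2 (a b ρ : ℝ) : ℝ :=
  (2 * Real.pi * Real.sqrt (1 - ρ ^ 2))⁻¹ *
    Real.exp (-(a ^ 2 - 2 * ρ * a * b + b ^ 2) / (2 * (1 - ρ ^ 2)))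

/-- Bivariate standard normal cdf with correlation ρ. -/
noncomputable def Phi2 (a b ρ : ℝ) : ℝ :=
  ∫ x in Set.Iic a, ∫ y in Set.Iic b, phi2 x y ρ

open Filter Topology ProbabilityTheory
open scoped NNReal

section Iic

variable {E : Type*} [NormedAddCommGroup E] [NormedSpace ℝ E]

theorem hasDerivAt_integral_Iic [CompleteSpace E] {f : ℝ → E} (hf : Continuous f)
    (hfi : Integrable f) (t : ℝ) : HasDerivAt (fun u => ∫ y in Iic u, f y) (f t) t := by
  have hsplit : (fun u => ∫ y in Iic u, f y) = fun u => (∫ y in Iic 0, f y) + ∫ y in 0..u, f y := by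
    ext u
    rw [← intervalIntegral.integral_Iic_sub_Iic hfi.integrableOn hfi.integrableOn, add_sub_cancel]
  rw [hsplit]
  exact ((intervalIntegral.integral_hasStrictDerivAt_right (hf.intervalIntegrable 0 t)
    (hf.stronglyMeasurableAtFilter _ _) hf.continuousAt).hasDerivAt).const_add _

theorem integral_Iic_comp_sub_div (g : ℝ → E) (b c : ℝ) {s : ℝ} (hs : 0 < s) :
    ∫ y in Iic b, g ((y - c) / s) = s • ∫ u in Iic ((b - c) / s), g u := by
  have hind : ∀ y, (Iic b).indicator (fun y => g ((y - c) / s)) y =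
      (Iic ((b - c) / s)).indicator g ((y - c) / s) := by
    intro y
    simp only [indicator, mem_Iic, div_le_div_iff_of_pos_right hs, sub_le_sub_iff_right]
  rw [← integral_indicator measurableSet_Iic, ← integral_indicator measurableSet_Iic,
    funext hind, integral_sub_right_eq_self (fun z => (Iic ((b - c) / s)).indicator g (z / s)) c,
    Measure.integral_comp_div, abs_of_pos hs]

end Iic

theorem continuous_gaussianPDFReal (μ : ℝ) (v : ℝ≥0) : Continuous (gaussianPDFReal μ v) := by
  unfold gaussianPDFReal
  fun_prop

theorem cdf_gaussianReal_eq_integral (μ : ℝ) {v : ℝ≥0} (hv : v ≠ 0) (t : ℝ) :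
    cdf (gaussianReal μ v) t = ∫ y in Iic t, gaussianPDFReal μ v y := by
  rw [cdf_eq_real, measureReal_def, gaussianReal_apply_eq_integral μ hv,
    ENNReal.toReal_ofReal (setIntegral_nonneg measurableSet_Iic fun y _ => gaussianPDFReal_nonneg μ v y)]

theorem hasDerivAt_cdf_gaussianReal (μ : ℝ) {v : ℝ≥0} (hv : v ≠ 0) (t : ℝ) :
    HasDerivAt (cdf (gaussianReal μ v)) (gaussianPDFReal μ v t) t := by
  rw [funext (cdf_gaussianReal_eq_integral μ hv)]
  exact hasDerivAt_integral_Iic (continuous_gaussianPDFReal μ v) (integrable_gaussianPDFReal μ v) t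

theorem continuous_cdf_gaussianReal (μ : ℝ) {v : ℝ≥0} (hv : v ≠ 0) :
    Continuous (cdf (gaussianReal μ v)) :=
  continuous_iff_continuousAt.2 fun t => (hasDerivAt_cdf_gaussianReal μ hv t).continuousAt

theorem phi2_eq_mul (x y : ℝ) {r : ℝ} (hr : r ^ 2 < 1) :
    phi2 x y r = gaussianPDFReal 0 1 x *
      ((√(1 - r ^ 2))⁻¹ * gaussianPDFReal 0 1 ((y - r * x) / √(1 - r ^ 2))) := by
  have hd : 1 - r ^ 2 ≠ 0 := by linarith
  have hs : 0 < √(1 - r ^ 2) := sqrt_pos.2 (by linarith)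
  have h2pi : √(2 * π) ^ 2 = 2 * π := sq_sqrt (by positivity)
  have hexp : -(x ^ 2 - 2 * r * x * y + y ^ 2) / (2 * (1 - r ^ 2)) =
      -x ^ 2 / 2 + -((y - r * x) / √(1 - r ^ 2)) ^ 2 / 2 := by
    rw [div_pow, sq_sqrt (by linarith)]
    field_simp
    ring
  simp only [phi2, gaussianPDFReal, NNReal.coe_one, mul_one, sub_zero, hexp, exp_add]
  field_simp
  rw [h2pi]

theorem integral_Iic_phi2 (x b : ℝ) {r : ℝ} (hr : r ^ 2 < 1) :
    ∫ y in Iic b, phi2 x y r =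
      gaussianPDFReal 0 1 x * cdf (gaussianReal 0 1) ((b - r * x) / √(1 - r ^ 2)) := by
  have hs : 0 < √(1 - r ^ 2) := sqrt_pos.2 (by linarith)
  simp_rw [phi2_eq_mul x _ hr]
  rw [integral_const_mul, integral_const_mul, integral_Iic_comp_sub_div _ _ _ hs,
    cdf_gaussianReal_eq_integral 0 one_ne_zero, smul_eq_mul, inv_mul_cancel_left₀ hs.ne']

theorem hasDerivAt_phi2_fst (x b r : ℝ) :
    HasDerivAt (fun t => phi2 t b r) (phi2 x b r * (r * b - x) / (1 - r ^ 2)) x := by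
  have hq : HasDerivAt (fun t => -(t ^ 2 - 2 * r * t * b + b ^ 2) / (2 * (1 - r ^ 2)))
      ((r * b - x) / (1 - r ^ 2)) x :=
    ((((hasDerivAt_pow 2 x).sub (((hasDerivAt_id x).const_mul (2 * r)).mul_const b)).add_const
      (b ^ 2)).neg.div_const (2 * (1 - r ^ 2))).congr_deriv
      (by rw [← mul_div_mul_left (r * b - x) (1 - r ^ 2) two_ne_zero]; ring)
  exact (hq.exp.const_mul (2 * π * √(1 - r ^ 2))⁻¹).congr_deriv (by simp only [phi2]; ring)

theorem hasDerivAt_integral_Iic_phi2 (x b : ℝ) {r : ℝ} (hr : r ^ 2 < 1) :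
    HasDerivAt (fun t => ∫ y in Iic b, phi2 x y t) (phi2 x b r * (r * b - x) / (1 - r ^ 2)) r := by
  have hd : 1 - r ^ 2 ≠ 0 := by linarith
  have hs : 0 < √(1 - r ^ 2) := sqrt_pos.2 (by linarith)
  have hs2 : √(1 - r ^ 2) ^ 2 = 1 - r ^ 2 := sq_sqrt (by linarith)
  have hsqrt : HasDerivAt (fun t => √(1 - t ^ 2)) (-r / √(1 - r ^ 2)) r :=
    (((hasDerivAt_pow 2 r).const_sub 1).sqrt hd).congr_deriv (by field_simp; ring)
  have hu : HasDerivAt (fun t => (b - t * x) / √(1 - t ^ 2))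
      ((r * b - x) / (√(1 - r ^ 2) * (1 - r ^ 2))) r := by
    refine ((((hasDerivAt_id r).mul_const x).const_sub b).div hsqrt hs.ne').congr_deriv ?_
    set s := √(1 - r ^ 2)
    rw [← hs2]
    simp only [id, one_mul]
    field_simp
    linear_combination (-x) * hs2
  have hclosed : (fun t => ∫ y in Iic b, phi2 x y t) =ᶠ[𝓝 r]
      fun t => gaussianPDFReal 0 1 x * cdf (gaussianReal 0 1) ((b - t * x) / √(1 - t ^ 2)) := by
    filter_upwards [(isOpen_lt (continuous_pow 2) continuous_const).mem_nhds hr] with t ht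
    exact integral_Iic_phi2 x b ht
  refine (((hasDerivAt_cdf_gaussianReal 0 one_ne_zero _).comp r hu).const_mul _).congr_of_eventuallyEq
    hclosed |>.congr_deriv ?_
  rw [phi2_eq_mul x b hr]
  field_simp

theorem phi2_nonneg (x y r : ℝ) : 0 ≤ phi2 x y r := by
  unfold phi2
  positivity

-- `x² - 2 r x y + y² = (1 - r²) x² + (y - r x)²`
theorem phi2_le (x y : ℝ) {r : ℝ} (hr : r ^ 2 < 1) :
    phi2 x y r ≤ (2 * π * √(1 - r ^ 2))⁻¹ * exp (-x ^ 2 / 2) := by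
  unfold phi2
  gcongr _ * exp ?_
  rw [div_le_div_iff₀ (by linarith) two_pos]
  nlinarith [sq_nonneg (y - r * x)]

theorem tendsto_phi2_atBot (b : ℝ) {r : ℝ} (hr : r ^ 2 < 1) :
    Tendsto (fun x => phi2 x b r) atBot (𝓝 0) := by
  have hsq : Tendsto (fun x : ℝ => x ^ 2) atBot atTop :=
    (tendsto_id.atBot_mul_atBot₀ tendsto_id).congr fun x => (sq x).symm
  have hexp : Tendsto (fun x : ℝ => exp (-x ^ 2 / 2)) atBot (𝓝 0) :=
    tendsto_exp_atBot.comp ((tendsto_neg_atTop_atBot.comp hsq).atBot_div_const two_pos)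
  have hbound := hexp.const_mul (2 * π * √(1 - r ^ 2))⁻¹
  rw [mul_zero] at hbound
  exact tendsto_of_tendsto_of_tendsto_of_le_of_le tendsto_const_nhds hbound (phi2_nonneg · b r)
    (phi2_le · b hr)

theorem integrable_add_abs_mul_exp_neg_sq (c : ℝ) :
    Integrable fun x : ℝ => (c + |x|) * exp (-x ^ 2 / 2) := by
  have hexp : Integrable fun x : ℝ => exp (-(1 / 2) * x ^ 2) :=
    integrable_exp_neg_mul_sq (by norm_num)
  have hmul : Integrable fun x : ℝ => |x * exp (-(1 / 2) * x ^ 2)| :=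
    (integrable_mul_exp_neg_mul_sq (by norm_num)).abs
  refine ((hexp.const_mul c).add hmul).congr (ae_of_all _ fun x => ?_)
  simp only [Pi.add_apply, abs_mul, abs_exp]
  ring_nf

theorem abs_deriv_phi2_fst_le (x b : ℝ) {δ r : ℝ} (hδ : 0 < δ) (hr : δ ≤ 1 - r ^ 2) :
    |phi2 x b r * (r * b - x) / (1 - r ^ 2)| ≤
      (2 * π * √δ * δ)⁻¹ * ((|b| + |x|) * exp (-x ^ 2 / 2)) := by
  have hr1 : r ^ 2 < 1 := by linarith
  have hrb : |r * b - x| ≤ |b| + |x| := by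
    have : |r| ≤ 1 := abs_le_one_iff_mul_self_le_one.2 (by nlinarith)
    calc |r * b - x| ≤ |r| * |b| + |x| := by rw [← abs_mul]; exact abs_sub _ _
      _ ≤ |b| + |x| := by gcongr; nlinarith [abs_nonneg b]
  rw [abs_div, abs_mul, abs_of_nonneg (phi2_nonneg x b r), abs_of_pos (show 0 < 1 - r ^ 2 by linarith)]
  calc phi2 x b r * |r * b - x| / (1 - r ^ 2)
      ≤ (2 * π * √(1 - r ^ 2))⁻¹ * exp (-x ^ 2 / 2) * (|b| + |x|) / (1 - r ^ 2) := by
        gcongr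
        exact phi2_le x b hr1
    _ ≤ (2 * π * √δ)⁻¹ * exp (-x ^ 2 / 2) * (|b| + |x|) / δ := by gcongr
    _ = (2 * π * √δ * δ)⁻¹ * ((|b| + |x|) * exp (-x ^ 2 / 2)) := by
        field_simp

theorem integrable_deriv_phi2_fst (b : ℝ) {r : ℝ} (hr : r ^ 2 < 1) :
    Integrable fun x => phi2 x b r * (r * b - x) / (1 - r ^ 2) :=
  ((integrable_add_abs_mul_exp_neg_sq |b|).const_mul _).mono'
    (Continuous.aestronglyMeasurable (by unfold phi2; fun_prop))
    (ae_of_all _ fun x => abs_deriv_phi2_fst_le x b (by linarith) le_rfl)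

theorem integral_Iic_deriv_phi2_fst (a b : ℝ) {r : ℝ} (hr : r ^ 2 < 1) :
    ∫ x in Iic a, phi2 x b r * (r * b - x) / (1 - r ^ 2) = phi2 a b r := by
  simpa using integral_Iic_of_hasDerivAt_of_tendsto' (fun x _ => hasDerivAt_phi2_fst x b r)
    (integrable_deriv_phi2_fst b hr).integrableOn (tendsto_phi2_atBot b hr)

theorem integrable_integral_Iic_phi2 (b : ℝ) {r : ℝ} (hr : r ^ 2 < 1) :
    Integrable fun x => ∫ y in Iic b, phi2 x y r := by
  simp_rw [integral_Iic_phi2 _ b hr]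
  refine (integrable_gaussianPDFReal 0 1).mono'
    (((continuous_gaussianPDFReal 0 1).mul ((continuous_cdf_gaussianReal 0 one_ne_zero).comp
      (by fun_prop))).aestronglyMeasurable) (ae_of_all _ fun x => ?_)
  rw [norm_mul, Real.norm_of_nonneg (gaussianPDFReal_nonneg 0 1 x),
    Real.norm_of_nonneg (cdf_nonneg _ _)]
  exact mul_le_of_le_one_right (gaussianPDFReal_nonneg 0 1 x) (cdf_le_one _ _)

/-- Plackett's identity: `∂Φ₂(a,b;ρ)/∂ρ = φ₂(a,b;ρ)` for `ρ ∈ (−1,1)`. -/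
theorem plackett_identity (a b ρ : ℝ) (hρ : ρ ∈ Set.Ioo (-1 : ℝ) 1) :
    HasDerivAt (fun r => Phi2 a b r) (phi2 a b ρ) ρ := by
  obtain ⟨m, hρm, hm1⟩ := exists_between (abs_lt.2 hρ)
  have hδ : 0 < 1 - m ^ 2 := by nlinarith [abs_nonneg ρ]
  have hU : Ioo (-m) m ∈ 𝓝 ρ := Ioo_mem_nhds (by linarith [neg_abs_le ρ]) (by linarith [le_abs_self ρ])
  have hm : ∀ r ∈ Ioo (-m) m, 1 - m ^ 2 ≤ 1 - r ^ 2 := fun r hr => by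
    nlinarith [sq_lt_sq' hr.1 hr.2]
  have hsq : ∀ r ∈ Ioo (-m) m, r ^ 2 < 1 := fun r hr => by linarith [hm r hr]
  have hρ2 : ρ ^ 2 < 1 := hsq ρ (mem_of_mem_nhds hU)
  obtain ⟨-, hderiv⟩ := hasDerivAt_integral_of_dominated_loc_of_deriv_le
    (μ := volume.restrict (Iic a)) (F := fun r x => ∫ y in Iic b, phi2 x y r)
    (F' := fun r x => phi2 x b r * (r * b - x) / (1 - r ^ 2)) hU
    (eventually_of_mem hU fun r hr =>
      (integrable_integral_Iic_phi2 b (hsq r hr)).aestronglyMeasurable.restrict)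
    (integrable_integral_Iic_phi2 b hρ2).restrict
    (integrable_deriv_phi2_fst b hρ2).aestronglyMeasurable.restrict
    (ae_of_all _ fun x r hr => abs_deriv_phi2_fst_le x b hδ (hm r hr))
    ((integrable_add_abs_mul_exp_neg_sq |b|).const_mul _).restrict
    (ae_of_all _ fun x r hr => hasDerivAt_integral_Iic_phi2 x b (hsq r hr))
  rwa [integral_Iic_deriv_phi2_fst a b hρ2] at hderiv
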